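/- Let p ≥ 3 be an integer, u = exp(2πi/(3p)), τ = −1 + i√2, α = 2 − u³ − conj(u)³, β = (conj(u)² − u)τ, and let H be the 3×3 Hermitian matrix [[α, β, conj(β)], [conj(β), α, β], [β, conj(β), α]]. Then H has signature (2,1): exactly two of its (real) eigenvalues are positive and exactly one is negative. -/

import Mathlib

open Matrix Finset

noncomputable section

/-- The Hermitian matrix H for u = exp(2πi/(3p)) and τ = −1 + i√2. -/
def Hp (p : ℕ) : Matrix (Fin 3) (Fin 3) ℂ :=
  let u : ℂ := Complex.exp (2 * Real.pi * Complex.I / (3 * p))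
  let τ : ℂ := -1 + Complex.I * Real.sqrt 2
  let α : ℂ := 2 - u ^ 3 - (starRingEnd ℂ u) ^ 3
  let β : ℂ := ((starRingEnd ℂ u) ^ 2 - u) * τ
  !![α, β, starRingEnd ℂ β; starRingEnd ℂ β, α, β; β, starRingEnd ℂ β, α]

/-!
Write w = u³ = e^{2πi/p} = c + is. The matrix H is circulant, so
det H = α³ + β³ + β̄³ - 3α|β|². On the unit circle |β|² = 3α and
β³ = w̄²(1 - w)³ τ³ with τ³ = 5 + i√2, and with α = 2 - 2c this collapses to
det H = -4(1 - c) s (2s + √2), which is negative since 0 < 2π/p < π, while tr H = 6(1 - c) > 0.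
Three real eigenvalues with negative product and positive sum are two positive and one negative.
-/

open ComplexConjugate Complex
open scoped Real

theorem det_circulant_fin_three {R : Type*} [CommRing R] (a b c : R) :
    !![a, b, c; c, a, b; b, c, a].det = a ^ 3 + b ^ 3 + c ^ 3 - 3 * a * b * c := by
  simp [det_fin_three]; ring

def tau : ℂ := -1 + I * √2

theorem tau_mul_conj : tau * conj tau = 3 := by
  have h : ((√2 : ℝ) : ℂ) ^ 2 = 2 := by norm_cast; simp
  simp only [tau, map_add, map_neg, map_one, map_mul, conj_I, conj_ofReal]
  linear_combination (-I ^ 2) * h - 2 * I_sq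

theorem tau_pow_three : tau ^ 3 = 5 + √2 * I := by
  have h : ((√2 : ℝ) : ℂ) ^ 2 = 2 := by norm_cast; simp
  simp only [tau]
  linear_combination (I ^ 3 * √2 - 3 * I ^ 2) * h + (2 * I * √2 - 6) * I_sq

def hermMatrix (u : ℂ) : Matrix (Fin 3) (Fin 3) ℂ :=
  let α := 2 - u ^ 3 - conj u ^ 3
  let β := (conj u ^ 2 - u) * tau
  !![α, β, conj β; conj β, α, β; β, conj β, α]

theorem Hp_eq_hermMatrix (p : ℕ) : Hp p = hermMatrix (exp (↑(2 * π / p / 3) * I)) := by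
  have h : 2 * π * I / (3 * p) = ↑(2 * π / p / 3) * I := by push_cast; ring
  rw [← h]
  rfl

theorem conj_sq_sub_mul_conj {u : ℂ} (hu : u * conj u = 1) :
    (conj u ^ 2 - u) * conj (conj u ^ 2 - u) = 2 - u ^ 3 - conj u ^ 3 := by
  simp only [map_sub, map_pow, conj_conj]
  linear_combination (u * conj u + 2) * hu

theorem conj_sq_sub_pow_three {u : ℂ} (hu : u * conj u = 1) :
    (conj u ^ 2 - u) ^ 3 = conj u ^ 6 - 3 * conj u ^ 3 + 3 - u ^ 3 := by
  linear_combination (3 * (u * conj u + 1) - 3 * conj u ^ 3) * hu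

theorem det_hermMatrix {u : ℂ} (hu : u * conj u = 1) :
    (hermMatrix u).det =
      (2 - u ^ 3 - conj u ^ 3) * ((u ^ 3 - conj u ^ 3) ^ 2 + √2 * I * (u ^ 3 - conj u ^ 3)) := by
  have hw : u ^ 3 * conj u ^ 3 = 1 := by rw [← mul_pow, hu, one_pow]
  have hβ : (conj u ^ 2 - u) * tau * conj ((conj u ^ 2 - u) * tau) =
      3 * (2 - u ^ 3 - conj u ^ 3) := by
    rw [map_mul, mul_mul_mul_comm, conj_sq_sub_mul_conj hu, tau_mul_conj]; ring
  have hβ3 : ((conj u ^ 2 - u) * tau) ^ 3 =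
      (conj u ^ 6 - 3 * conj u ^ 3 + 3 - u ^ 3) * (5 + √2 * I) := by
    rw [mul_pow, conj_sq_sub_pow_three hu, tau_pow_three]
  have hβ3' : conj ((conj u ^ 2 - u) * tau) ^ 3 =
      (u ^ 6 - 3 * u ^ 3 + 3 - conj u ^ 3) * (5 - √2 * I) := by
    rw [← map_pow, hβ3]
    simp only [map_pow, map_mul, map_add, map_sub, map_ofNat, conj_conj, conj_ofReal, conj_I]
    ring
  rw [hermMatrix, det_circulant_fin_three]
  linear_combination hβ3 + hβ3' - 3 * (2 - u ^ 3 - conj u ^ 3) * hβ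
    - (2 + 4 * (u ^ 3 + conj u ^ 3)) * hw

theorem conj_pow_eq_of_pow_eq {u : ℂ} {n : ℕ} {c s : ℝ} (h : u ^ n = c + s * I) :
    conj u ^ n = c - s * I := by
  rw [← map_pow, h, map_add, map_mul, conj_ofReal, conj_ofReal, conj_I]
  ring

theorem det_hermMatrix_eq_ofReal {u : ℂ} (hu : u * conj u = 1) {c s : ℝ}
    (hu3 : u ^ 3 = c + s * I) : (hermMatrix u).det = ↑(-4 * (1 - c) * s * (2 * s + √2)) := by
  rw [det_hermMatrix hu, conj_pow_eq_of_pow_eq hu3, hu3]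
  push_cast
  linear_combination ((8 * s ^ 2 + 4 * √2 * s) * (1 - c)) * I_sq

theorem trace_hermMatrix_eq_ofReal {u : ℂ} {c s : ℝ} (hu3 : u ^ 3 = c + s * I) :
    (hermMatrix u).trace = ↑(6 * (1 - c)) := by
  rw [hermMatrix, trace_fin_three_of, conj_pow_eq_of_pow_eq hu3, hu3]
  push_cast
  ring

theorem exp_ofReal_mul_I_mul_conj (θ : ℝ) : exp (θ * I) * conj (exp (θ * I)) = 1 := by
  rw [mul_conj', norm_exp_ofReal_mul_I, ofReal_one, one_pow]

theorem exp_ofReal_div_three_mul_I_pow_three (θ : ℝ) :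
    exp (↑(θ / 3) * I) ^ 3 = Real.cos θ + Real.sin θ * I := by
  rw [← Complex.exp_nat_mul, ofReal_cos, ofReal_sin, ← exp_mul_I]
  congr 1
  push_cast
  ring

theorem card_pos_eq_two_and_card_neg_eq_one_of_prod_neg_of_sum_pos (e : Fin 3 → ℝ)
    (hprod : ∏ i, e i < 0) (hsum : 0 < ∑ i, e i) :
    #{j | 0 < e j} = 2 ∧ #{j | e j < 0} = 1 := by
  rw [Fin.prod_univ_three] at hprod
  rw [Fin.sum_univ_three] at hsum
  have h0 : e 0 ≠ 0 := by rintro h; simp [h] at hprod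
  have h1 : e 1 ≠ 0 := by rintro h; simp [h] at hprod
  have h2 : e 2 ≠ 0 := by rintro h; simp [h] at hprod
  simp only [card_filter, Fin.sum_univ_three]
  -- sign patterns with an even number of negatives contradict `hprod`, three negatives `hsum`
  rcases h0.lt_or_gt with h0 | h0 <;> rcases h1.lt_or_gt with h1 | h1 <;>
    rcases h2.lt_or_gt with h2 | h2 <;>
    first
    | simp [h0, h1, h2, h0.not_gt, h1.not_gt, h2.not_gt]; done
    | linarith
    | nlinarith [mul_pos h0 h1]
    | nlinarith [mul_pos_of_neg_of_neg h0 h1]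
    | nlinarith [mul_neg_of_neg_of_pos h0 h1]
    | nlinarith [mul_neg_of_pos_of_neg h0 h1]

theorem Matrix.IsHermitian.card_pos_eq_two_and_card_neg_eq_one {𝕜 : Type*} [RCLike 𝕜]
    {A : Matrix (Fin 3) (Fin 3) 𝕜} (hA : A.IsHermitian) (hdet : RCLike.re A.det < 0)
    (htr : 0 < RCLike.re A.trace) :
    #{j | 0 < hA.eigenvalues j} = 2 ∧ #{j | hA.eigenvalues j < 0} = 1 := by
  apply card_pos_eq_two_and_card_neg_eq_one_of_prod_neg_of_sum_pos
  · rwa [hA.det_eq_prod_eigenvalues, ← RCLike.ofReal_prod, RCLike.ofReal_re] at hdet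
  · rwa [hA.trace_eq_sum_eigenvalues, ← RCLike.ofReal_sum, RCLike.ofReal_re] at htr

theorem sin_pos_and_cos_lt_one {p : ℕ} (hp : 3 ≤ p) :
    0 < Real.sin (2 * π / p) ∧ Real.cos (2 * π / p) < 1 := by
  have hp' : (3 : ℝ) ≤ p := by exact_mod_cast hp
  have hs : 0 < Real.sin (2 * π / p) := by
    apply Real.sin_pos_of_pos_of_lt_pi (by positivity)
    rw [div_lt_iff₀ (by positivity)]
    nlinarith [Real.pi_pos]
  refine ⟨hs, ?_⟩
  nlinarith [Real.sin_sq_add_cos_sq (2 * π / p)]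

/-- for integers p ≥ 3, the Hermitian matrix H has signature (2,1):
exactly two positive (real) eigenvalues and exactly one negative eigenvalue. -/
theorem stmt_6 (p : ℕ) (hp : 3 ≤ p) (hH : (Hp p).IsHermitian) :
    (univ.filter fun j : Fin 3 => 0 < hH.eigenvalues j).card = 2 ∧
    (univ.filter fun j : Fin 3 => hH.eigenvalues j < 0).card = 1 := by
  set u := exp (↑(2 * π / p / 3) * I)
  have hu : u * conj u = 1 := exp_ofReal_mul_I_mul_conj _
  have hu3 : u ^ 3 = Real.cos (2 * π / p) + Real.sin (2 * π / p) * I :=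
    exp_ofReal_div_three_mul_I_pow_three _
  obtain ⟨hs, hc⟩ := sin_pos_and_cos_lt_one hp
  apply hH.card_pos_eq_two_and_card_neg_eq_one
  · rw [Hp_eq_hermMatrix, det_hermMatrix_eq_ofReal hu hu3, RCLike.re_to_complex, ofReal_re]
    have hpos : 0 < 2 * Real.sin (2 * π / p) + √2 := by positivity
    nlinarith [mul_pos (mul_pos (sub_pos.2 hc) hs) hpos]
  · rw [Hp_eq_hermMatrix, trace_hermMatrix_eq_ofReal hu3, RCLike.re_to_complex, ofReal_re]
    linarith

end
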